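/- Let Γ be a connected locally finite graph and G ≤ Aut(Γ). If some point stabiliser of G is infinite, then the quasi-centre QZ(G) has infinitely many orbits on VΓ. -/

import Mathlib

/-- The automorphism group of a simple graph `Γ`, as a subgroup of `Sym(V)`. -/
def autSub {V : Type*} (Γ : SimpleGraph V) : Subgroup (Equiv.Perm V) where
  carrier := {g | ∀ a b : V, Γ.Adj (g a) (g b) ↔ Γ.Adj a b}
  one_mem' := by intro a b; simp
  mul_mem' := by
    intro x y hx hy a b
    simpa [Equiv.Perm.mul_apply] using (hx (y a) (y b)).trans (hy a b)
  inv_mem' := by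
    intro g hg a b
    rw [← hg (g⁻¹ a) (g⁻¹ b)]
    simp


/-- The quasi-centre of `G ≤ Sym(V)`: the set of `g ∈ G` centralised by the pointwise
stabiliser in `G` of some finite set of points. -/
def QZset {V : Type*} (G : Subgroup (Equiv.Perm V)) : Set (Equiv.Perm V) :=
  {g | g ∈ G ∧ ∃ Φ : Finset V, ∀ h ∈ G, (∀ x ∈ Φ, h x = x) → h * g = g * h}

/-- Ball of radius `n` around `v₀`, defined via walk lengths. -/
private def ball {V : Type*} (Γ : SimpleGraph V) (v₀ : V) (n : ℕ) : Set V :=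
  {v | ∃ w : Γ.Walk v₀ v, w.length ≤ n}

private lemma ball_mono {V : Type*} {Γ : SimpleGraph V} {v₀ : V} {n m : ℕ} (h : n ≤ m) :
    ball Γ v₀ n ⊆ ball Γ v₀ m := fun _ ⟨w, hw⟩ => ⟨w, hw.trans h⟩

private lemma ball_finite {V : Type*} (Γ : SimpleGraph V)
    (hlf : ∀ v : V, (Γ.neighborSet v).Finite) :
    ∀ (n : ℕ) (u : V), {v | ∃ w : Γ.Walk u v, w.length ≤ n}.Finite := by
  intro n
  induction n with
  | zero =>
    intro u
    refine Set.Finite.subset (Set.finite_singleton u) ?_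
    rintro v ⟨w, hw⟩
    cases w with
    | nil => exact Set.mem_singleton u
    | cons hadj p => simp [SimpleGraph.Walk.length_cons] at hw
  | succ n ih =>
    intro u
    refine Set.Finite.subset ((Set.finite_singleton u).union
      ((hlf u).biUnion (fun c _ => ih c))) ?_
    rintro v ⟨w, hw⟩
    cases w with
    | nil => exact Or.inl (Set.mem_singleton u)
    | cons hadj p =>
      refine Or.inr (Set.mem_biUnion hadj ⟨p, ?_⟩)
      simp only [SimpleGraph.Walk.length_cons] at hw
      omega

private lemma autSub_walk {V : Type*} {Γ : SimpleGraph V} {g : Equiv.Perm V}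
    (hg : g ∈ autSub Γ) : ∀ {a b : V} (w : Γ.Walk a b),
    ∃ w' : Γ.Walk (g a) (g b), w'.length = w.length := by
  intro a b w
  induction w with
  | nil => exact ⟨.nil, rfl⟩
  | cons hadj p ih =>
    obtain ⟨w', hw'⟩ := ih
    exact ⟨.cons ((hg _ _).mpr hadj) w', by simp [SimpleGraph.Walk.length_cons, hw']⟩

/-- `v` is `r`-good: `v = q s` with `q ∈ G` centralised by the pointwise stabiliser
in `G` of the ball of radius `r`. -/
private def Good {V : Type*} (Γ : SimpleGraph V) (v₀ : V) (S : Finset V)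
    (G : Subgroup (Equiv.Perm V)) (r : ℕ) (v : V) : Prop :=
  ∃ s ∈ S, ∃ q ∈ G, q s = v ∧
    ∀ h ∈ G, (∀ x ∈ ball Γ v₀ r, h x = x) → h * q = q * h

private lemma good_mono {V : Type*} {Γ : SimpleGraph V} {v₀ : V} {S : Finset V}
    {G : Subgroup (Equiv.Perm V)} {r r' : ℕ} {v : V} (h : r ≤ r') :
    Good Γ v₀ S G r v → Good Γ v₀ S G r' v := by
  rintro ⟨s, hs, q, hqG, hqs, hcomm⟩
  exact ⟨s, hs, q, hqG, hqs,
    fun h' hh' hfix => hcomm h' hh' (fun x hx => hfix x (ball_mono h hx))⟩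

/-- Let `Γ` be a connected locally finite graph and `G ≤ Aut(Γ)`.  If some point
stabiliser of `G` is infinite, then the quasi-centre `QZ(G)` has infinitely many
orbits on `VΓ`. -/
theorem stmt12 {V : Type*} (Γ : SimpleGraph V) (hconn : Γ.Connected)
    (hlf : ∀ v : V, (Γ.neighborSet v).Finite)
    (G : Subgroup (Equiv.Perm V)) (hG : G ≤ autSub Γ)
    (hstab : ∃ v : V, {g : Equiv.Perm V | g ∈ G ∧ g v = v}.Infinite) :
    ¬ ∃ S : Finset V, ∀ v : V, ∃ s ∈ S, ∃ g ∈ QZset G, g s = v := by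
  rintro ⟨S, hS⟩
  obtain ⟨v₀, hv₀⟩ := hstab
  have hball_fin : ∀ n : ℕ, (ball Γ v₀ n).Finite := fun n => ball_finite Γ hlf n v₀
  -- every vertex is in some ball
  have hradex : ∀ v : V, ∃ n, v ∈ ball Γ v₀ n := by
    intro v
    exact (hconn.preconnected v₀ v).elim (fun w => ⟨w.length, w, le_rfl⟩)
  let rad : V → ℕ := fun v => (hradex v).choose
  have hrad : ∀ v, v ∈ ball Γ v₀ (rad v) := fun v => (hradex v).choose_spec
  -- n₀ : radius containing S
  let n₀ : ℕ := S.sup rad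
  have hSball : ∀ s ∈ S, s ∈ ball Γ v₀ n₀ :=
    fun s hs => ball_mono (Finset.le_sup hs) (hrad s)
  -- every vertex is r-good for some r
  have hgood : ∀ v : V, ∃ r, Good Γ v₀ S G r v := by
    intro v
    obtain ⟨s, hs, g, ⟨hgG, Φ, hΦ⟩, hgs⟩ := hS v
    refine ⟨Φ.sup rad, s, hs, g, hgG, hgs, ?_⟩
    intro h hhG hfix
    exact hΦ h hhG (fun x hx => hfix x (ball_mono (Finset.le_sup hx) (hrad x)))
  let rG : V → ℕ := fun v => (hgood v).choose
  have hrG : ∀ v, Good Γ v₀ S G (rG v) v := fun v => (hgood v).choose_spec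
  -- M₁ : uniform goodness level on the finite ball of radius n₀+1
  let M₁ : ℕ := (hball_fin (n₀ + 1)).toFinset.sup rG
  have hM₁ : ∀ x ∈ ball Γ v₀ (n₀ + 1), Good Γ v₀ S G M₁ x := by
    intro x hx
    exact good_mono (Finset.le_sup ((hball_fin _).mem_toFinset.mpr hx)) (hrG x)
  -- propagation along edges
  have step : ∀ u u' : V, Good Γ v₀ S G M₁ u → Γ.Adj u u' → Good Γ v₀ S G M₁ u' := by
    intro u u' hu hadj
    obtain ⟨s, hsS, q, hqG, hqs, hcomm⟩ := hu
    have hx : Γ.Adj s (q⁻¹ u') := by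
      have h1 : Γ.Adj (q s) (q (q⁻¹ u')) := by
        rw [hqs, ← Equiv.Perm.mul_apply, mul_inv_cancel, Equiv.Perm.one_apply]; exact hadj
      exact (hG hqG s (q⁻¹ u')).mp h1
    have hxball : q⁻¹ u' ∈ ball Γ v₀ (n₀ + 1) := by
      obtain ⟨w, hw⟩ := hSball s hsS
      exact ⟨w.concat hx, by rw [SimpleGraph.Walk.length_concat]; omega⟩
    obtain ⟨s', hs'S, q', hq'G, hq's, hcomm'⟩ := hM₁ _ hxball
    refine ⟨s', hs'S, q * q', mul_mem hqG hq'G, ?_, ?_⟩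
    · rw [Equiv.Perm.mul_apply, hq's, ← Equiv.Perm.mul_apply, mul_inv_cancel, Equiv.Perm.one_apply]
    · intro h hhG hfix
      have h1 := hcomm h hhG hfix
      have h2 := hcomm' h hhG hfix
      rw [← mul_assoc, h1, mul_assoc, h2, ← mul_assoc]
  -- every vertex is M₁-good
  have walkprop : ∀ (a b : V) (w : Γ.Walk a b),
      Good Γ v₀ S G M₁ a → Good Γ v₀ S G M₁ b := by
    intro a b w
    induction w with
    | nil => exact id
    | cons hadj p ih => exact fun h => ih (step _ _ h hadj)
  obtain ⟨s₀, hs₀S, -⟩ := hS v₀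
  have hgood₀ : Good Γ v₀ S G M₁ s₀ :=
    hM₁ s₀ (ball_mono (Nat.le_succ n₀) (hSball s₀ hs₀S))
  have key : ∀ v : V, Good Γ v₀ S G M₁ v := by
    intro v
    exact (hconn.preconnected s₀ v).elim (fun w => walkprop s₀ v w hgood₀)
  -- pigeonhole: find nontrivial h ∈ G fixing the ball of radius M pointwise
  let M : ℕ := max M₁ n₀
  let T : Set (Equiv.Perm V) := {g : Equiv.Perm V | g ∈ G ∧ g v₀ = v₀}
  have hTinf : T.Infinite := hv₀
  haveI := hTinf.to_subtype
  have hmapmem : ∀ g : Equiv.Perm V, g ∈ G → g v₀ = v₀ →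
      ∀ x, x ∈ ball Γ v₀ M → g x ∈ ball Γ v₀ M := by
    intro g hgG hgv x hx
    obtain ⟨w, hw⟩ := hx
    obtain ⟨w', hw'⟩ := autSub_walk (hG hgG) w
    have hmem : ∃ w'' : Γ.Walk (g v₀) (g x), w''.length ≤ M := ⟨w', hw'.le.trans hw⟩
    rw [hgv] at hmem
    exact hmem
  let BF := (hball_fin M).toFinset
  let ψ : T → (BF → BF) := fun g x =>
    ⟨g.1 x.1, by
      have hx : (x : V) ∈ ball Γ v₀ M := (hball_fin M).mem_toFinset.mp x.2
      exact (hball_fin M).mem_toFinset.mpr (hmapmem g.1 g.2.1 g.2.2 x.1 hx)⟩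
  obtain ⟨a, b, hab, hψ⟩ := Finite.exists_ne_map_eq_of_infinite ψ
  let h₀ : Equiv.Perm V := b.1⁻¹ * a.1
  have hfix : ∀ x ∈ ball Γ v₀ M, h₀ x = x := by
    intro x hx
    have h1 : ψ a ⟨x, (hball_fin M).mem_toFinset.mpr hx⟩
        = ψ b ⟨x, (hball_fin M).mem_toFinset.mpr hx⟩ := by rw [hψ]
    have hax : a.1 x = b.1 x := congrArg Subtype.val h1
    show b.1⁻¹ (a.1 x) = x
    rw [hax, ← Equiv.Perm.mul_apply, inv_mul_cancel, Equiv.Perm.one_apply]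
  have hh₀G : h₀ ∈ G := mul_mem (inv_mem b.2.1) a.2.1
  have hne : h₀ ≠ 1 := by
    intro hc
    have hba : b.1 = a.1 := inv_mul_eq_one.mp hc
    exact hab (Subtype.ext hba.symm)
  have hy : ∃ y, h₀ y ≠ y := by
    by_contra hc
    push_neg at hc
    exact hne (Equiv.ext hc)
  obtain ⟨y, hy⟩ := hy
  obtain ⟨s, hsS, q, hqG, hqs, hcomm⟩ := key y
  have hcq := hcomm h₀ hh₀G (fun x hx => hfix x (ball_mono (le_max_left M₁ n₀) hx))
  have hsM : s ∈ ball Γ v₀ M := ball_mono (le_max_right M₁ n₀) (hSball s hsS)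
  have hyy : h₀ y = y := by
    have h1 : (h₀ * q) s = (q * h₀) s := by rw [hcq]
    simpa [Equiv.Perm.mul_apply, hqs, hfix s hsM] using h1
  exact hy hyy
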